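/- Let w be a nonempty string over a finite alphabet Σ, let q and p be integers with q > |w| and p ≥ 1, let P be a string over Σ with |P| = q, and let t = w·pre(w^{p−1}, q−1). Then for every i ∈ Occ(w^p, P), the position j = ((i−1) mod |w|) + 1 satisfies j ∈ Occ(t, P), and i = j + m·|w| for some integer m ≥ 0. -/

import Mathlib

/-- `Occ T P` is the set of (1-based) occurrence positions of `P` in `T`:
`{ i : 1 ≤ i ≤ |T|−|P|+1 and T[i:i+|P|−1] = P }`. -/
def Occ {α : Type*} [DecidableEq α] (T P : List α) : Finset ℕ :=
  (Finset.Icc 1 (T.length - P.length + 1)).filter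
    (fun i => (T.drop (i - 1)).take P.length = P)

/-- `pre T k = T[1:min(k,|T|)]`, the prefix of `T` of length at most `k`. -/
def pre {α : Type*} (T : List α) (k : ℕ) : List α := T.take k

/-- `suf T k = T[|T|−min(k,|T|)+1:|T|]`, the suffix of `T` of length at most `k`. -/
def suf {α : Type*} (T : List α) (k : ℕ) : List α := T.drop (T.length - k)

/-- `listPow w p` is the `p`-fold concatenation `w^p`. -/
def listPow {α : Type*} (w : List α) : ℕ → List α
  | 0 => []
  | p + 1 => w ++ listPow w p

/-!
Since `w^p` has period `|w|`, moving an occurrence of `P` back by a multiple of `|w|` keeps it an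
occurrence; moved back to `j ≤ |w|` it ends by position `|w| + q - 1`. Both `w^p` and
`t = w · pre(w^{p-1}, q-1)` are prefixes of `w^{p+1}`, so an occurrence of `w^p` ending that early
is also one of `t`.
-/

section

variable {α : Type*}

lemma listPow_length (w : List α) (n : ℕ) : (listPow w n).length = n * w.length := by
  induction n with
  | zero => simp [listPow]
  | succ n ih => simp [listPow, ih, Nat.succ_mul, Nat.add_comm]

lemma listPow_prefix_succ (w : List α) (n : ℕ) : listPow w n <+: listPow w (n + 1) := by
  induction n with
  | zero => exact List.nil_prefix
  | succ n ih => exact (List.prefix_append_right_inj w).2 ih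

lemma listPow_prefix_of_le (w : List α) {m n : ℕ} (h : m ≤ n) : listPow w m <+: listPow w n := by
  induction n, h using Nat.le_induction with
  | base => exact List.prefix_refl _
  | succ n _ ih => exact ih.trans (listPow_prefix_succ w n)

lemma drop_length_listPow (w : List α) (p : ℕ) :
    (listPow w p).drop w.length = listPow w (p - 1) := by
  cases p with
  | zero => simp [listPow]
  | succ n => exact List.drop_left

lemma List.IsPrefix.take_drop_eq {l₁ l₂ : List α} (h : l₁ <+: l₂) {s k : ℕ}
    (hk : s + k ≤ l₁.length) : (l₂.drop s).take k = (l₁.drop s).take k := by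
  rw [List.prefix_iff_eq_take.1 h, List.drop_take, List.take_take, Nat.min_eq_left (by omega)]

variable [DecidableEq α] {T P : List α} {i : ℕ}

lemma mem_Occ_iff :
    i ∈ Occ T P ↔ 1 ≤ i ∧ i - 1 + P.length ≤ T.length ∧ (T.drop (i - 1)).take P.length = P := by
  simp only [Occ, Finset.mem_filter, Finset.mem_Icc]
  constructor
  · rintro ⟨⟨hi, hi'⟩, hT⟩
    have hlen := congrArg List.length hT
    simp only [List.length_take, List.length_drop] at hlen
    exact ⟨hi, by omega, hT⟩
  · rintro ⟨hi, hlen, hT⟩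
    exact ⟨⟨hi, by omega⟩, hT⟩

lemma mem_Occ_of_prefix {T' : List α} (h : T <+: T') (hi : i ∈ Occ T P) : i ∈ Occ T' P := by
  obtain ⟨hi1, hlen, hT⟩ := mem_Occ_iff.1 hi
  exact mem_Occ_iff.2 ⟨hi1, hlen.trans h.length_le, (h.take_drop_eq hlen).trans hT⟩

lemma mem_Occ_of_prefix_of_le {T' : List α} (h : T <+: T') (hi : i ∈ Occ T' P)
    (hlen : i - 1 + P.length ≤ T.length) : i ∈ Occ T P := by
  obtain ⟨hi1, -, hT⟩ := mem_Occ_iff.1 hi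
  exact mem_Occ_iff.2 ⟨hi1, hlen, (h.take_drop_eq hlen).symm.trans hT⟩

lemma mem_Occ_drop_of_add_mem (hi : 1 ≤ i) {k : ℕ} (h : i + k ∈ Occ T P) :
    i ∈ Occ (T.drop k) P := by
  obtain ⟨-, hlen, hT⟩ := mem_Occ_iff.1 h
  have hidx : k + (i - 1) = i + k - 1 := by omega
  refine mem_Occ_iff.2 ⟨hi, ?_, ?_⟩
  · rw [List.length_drop]
    omega
  · rwa [List.drop_drop, hidx]

lemma mem_Occ_listPow_of_add_length {w : List α} {p : ℕ} (hi : 1 ≤ i)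
    (h : i + w.length ∈ Occ (listPow w p) P) : i ∈ Occ (listPow w p) P := by
  have hdrop := mem_Occ_drop_of_add_mem hi h
  rw [drop_length_listPow] at hdrop
  exact mem_Occ_of_prefix (listPow_prefix_of_le w (Nat.sub_le p 1)) hdrop

lemma mem_Occ_listPow_of_add_mul {w : List α} {p : ℕ} (m : ℕ) (hi : 1 ≤ i)
    (h : i + m * w.length ∈ Occ (listPow w p) P) : i ∈ Occ (listPow w p) P := by
  induction m with
  | zero => simpa using h
  | succ m ih =>
    rw [Nat.succ_mul, ← Nat.add_assoc] at h
    exact ih (mem_Occ_listPow_of_add_length (by omega) h)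

lemma mem_Occ_append_pre_of_mem_Occ_listPow {w : List α} {p j : ℕ}
    (hj : j ∈ Occ (listPow w p) P) (hjw : j ≤ w.length) :
    j ∈ Occ (w ++ pre (listPow w (p - 1)) (P.length - 1)) P := by
  have hprefix : w ++ pre (listPow w (p - 1)) (P.length - 1) <+: listPow w (p + 1) :=
    (List.prefix_append_right_inj w).2
      ((List.take_prefix _ _).trans (listPow_prefix_of_le w (by omega)))
  refine mem_Occ_of_prefix_of_le hprefix (mem_Occ_of_prefix (listPow_prefix_succ w p) hj) ?_
  obtain ⟨hj1, hlen, -⟩ := mem_Occ_iff.1 hj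
  simp only [listPow_length] at hlen
  simp only [pre, List.length_append, List.length_take, listPow_length, Nat.sub_one_mul]
  omega

end

theorem pow_occurrence_reduces_to_t_general {α : Type*} [DecidableEq α]
    (w : List α) (hw : w ≠ []) (q p : ℕ)
    (P : List α) (hP : P.length = q) :
    ∀ i ∈ Occ (listPow w p) P,
      ((i - 1) % w.length + 1) ∈ Occ (w ++ pre (listPow w (p - 1)) (q - 1)) P ∧
        ∃ m : ℕ, i = ((i - 1) % w.length + 1) + m * w.length := by
  intro i hi
  have hi1 : 1 ≤ i := (mem_Occ_iff.1 hi).1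
  have hdecomp : i = ((i - 1) % w.length + 1) + (i - 1) / w.length * w.length := by
    have := Nat.mod_add_div' (i - 1) w.length
    omega
  have hmod : (i - 1) % w.length < w.length := Nat.mod_lt _ (List.length_pos_iff.2 hw)
  refine ⟨?_, _, hdecomp⟩
  rw [← hP]
  exact mem_Occ_append_pre_of_mem_Occ_listPow
    (mem_Occ_listPow_of_add_mul _ (Nat.succ_pos _) (hdecomp ▸ hi)) hmod

/-- for `q > |w|`, `p ≥ 1` and `t = w·pre(w^{p−1}, q−1)`, every occurrence
`i ∈ Occ(w^p,P)` reduces, via `j = ((i−1) mod |w|) + 1`, to an occurrence `j ∈ Occ(t,P)`,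
and `i = j + m·|w|` for some `m ≥ 0`. -/
theorem pow_occurrence_reduces_to_t {α : Type*} [Fintype α] [DecidableEq α]
    (w : List α) (hw : w ≠ []) (q p : ℕ) (hq : w.length < q) (hp : 1 ≤ p)
    (P : List α) (hP : P.length = q) :
    ∀ i ∈ Occ (listPow w p) P,
      ((i - 1) % w.length + 1) ∈ Occ (w ++ pre (listPow w (p - 1)) (q - 1)) P ∧
        ∃ m : ℕ, i = ((i - 1) % w.length + 1) + m * w.length :=
  pow_occurrence_reduces_to_t_general w hw q p P hP
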